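/- Let n ≥ 1 be an integer and let λ be a Borel probability measure on ℝ^n with dim_{l^1} λ = s ∈ (0, n). Then for every σ > n − s, the integral ∫_{ℝ^n} |λ̂(ξ)| / (|ξ|^σ + 1) dξ is finite. -/

import Mathlib

open MeasureTheory Metric Set
open scoped ENNReal NNReal

noncomputable section

/-- The Fourier transform of a measure on `ℝⁿ`. -/
def mFT {n : ℕ} (μ : Measure (EuclideanSpace ℝ (Fin n))) (ξ : EuclideanSpace ℝ (Fin n)) : ℂ :=
  ∫ x, Complex.exp (((-2 * Real.pi * (inner ℝ x ξ : ℝ) : ℝ) : ℂ) * Complex.I) ∂μ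

/-- An integer lattice point of `ℤⁿ`, regarded as a point of `ℝⁿ`. -/
def lat {n : ℕ} (k : Fin n → ℤ) : EuclideanSpace ℝ (Fin n) := WithLp.toLp 2 (fun i => (k i : ℝ))

/-- The Fourier `l^p` dimension of a measure on `ℝⁿ`. -/
def dimlp {n : ℕ} (p : ℝ) (μ : Measure (EuclideanSpace ℝ (Fin n))) : ℝ :=
  sSup {s : ℝ | 0 < s ∧ ∃ C : ℝ, 0 < C ∧ ∀ R : ℝ, 1 ≤ R →
    ∀ θ : EuclideanSpace ℝ (Fin n), (∀ i, θ i ∈ Set.Icc (0 : ℝ) 1) →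
      (∑' k : Fin n → ℤ, if ‖lat k‖ ≤ R then ‖mFT μ (lat k + θ)‖ ^ p else 0)
        ≤ C * R ^ ((n : ℝ) - s)}

/-- The (topological) support of a measure. -/
def msupp {X : Type*} [TopologicalSpace X] [MeasurableSpace X] (μ : Measure X) : Set X :=
  {x | ∀ U : Set X, IsOpen U → x ∈ U → 0 < μ U}

/-- The lower Hausdorff dimension of a measure. -/
def muDimH {X : Type*} [EMetricSpace X] [MeasurableSpace X] (μ : Measure X) : ℝ≥0∞ :=
  ⨅ (A : Set X) (_ : MeasurableSet A) (_ : 0 < μ A), dimH A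

/-- The surface measure on the unit sphere `S^{n-1}`, as the `(n-1)`-dimensional
Hausdorff measure restricted to the sphere. -/
def sphMeasure (n : ℕ) : Measure (EuclideanSpace ℝ (Fin n)) :=
  (μH[((n : ℝ) - 1)]).restrict (sphere (0 : EuclideanSpace ℝ (Fin n)) 1)

/-- The radial projection centred at `x`. -/
def radProj {n : ℕ} (x y : EuclideanSpace ℝ (Fin n)) : EuclideanSpace ℝ (Fin n) :=
  ‖y - x‖⁻¹ • (y - x)

/-- Identify `ℝ × ℝ` with the Euclidean plane. -/
def toE2 (q : ℝ × ℝ) : EuclideanSpace ℝ (Fin 2) := !₂[q.1, q.2]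

/-!
Periodizing over `ℤⁿ` turns the integral into `∫_{[0,1)ⁿ} ∑_k |λ̂(k+θ)| / (|k+θ|^σ + 1) dθ`, so it
suffices to bound the lattice sum uniformly in `θ`. Pick an exponent `s' > n - σ` admissible in the
definition of `dim_{l¹} λ`, so that `∑_{|k| ≤ R} |λ̂(k+θ)| ≲ R^{n-s'}`. On the dyadic scale `2^j`
the weight is `≲ 2^{-jσ}` while the points with `|k+θ| ≤ 2^j` contribute `≲ 2^{j(n-s')}`, and the
resulting geometric series converges because `n - s' < σ`.
-/

lemma lat_neg {n : ℕ} (k : Fin n → ℤ) : lat (-k) = -lat k := by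
  ext i; simp [lat]

lemma norm_le_norm_lat {n : ℕ} (k : Fin n → ℤ) : ‖k‖ ≤ ‖lat k‖ :=
  pi_norm_le_iff_of_nonneg (norm_nonneg _) |>.mpr fun i => by
    simpa [lat, Int.norm_eq_abs] using PiLp.norm_apply_le (lat k) i

lemma finite_setOf_norm_lat_le {n : ℕ} (R : ℝ) : {k : Fin n → ℤ | ‖lat k‖ ≤ R}.Finite :=
  (isCompact_closedBall (0 : Fin n → ℤ) R).finite_of_discrete.subset fun k hk =>
    mem_closedBall_zero_iff.mpr ((norm_le_norm_lat k).trans hk)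

lemma tsum_ite_ofReal_le_ofReal_tsum_lat {n : ℕ} {a : (Fin n → ℤ) → ℝ} (ha : ∀ k, 0 ≤ a k)
    {P : (Fin n → ℤ) → Prop} [DecidablePred P] {R : ℝ} (hP : ∀ k, P k → ‖lat k‖ ≤ R) :
    ∑' k, (if P k then ENNReal.ofReal (a k) else 0) ≤
      ENNReal.ofReal (∑' k, if ‖lat k‖ ≤ R then a k else 0) := by
  have hsum : Summable fun k : Fin n → ℤ => if ‖lat k‖ ≤ R then a k else 0 :=
    summable_of_hasFiniteSupport <| (finite_setOf_norm_lat_le R).subset fun k hk => by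
      by_contra h; exact hk (if_neg h)
  rw [ENNReal.ofReal_tsum_of_nonneg (fun k => by split_ifs <;> simp [ha k]) hsum]
  refine ENNReal.tsum_le_tsum fun k => ?_
  split_ifs with hk hk'
  · exact le_rfl
  · exact absurd (hP k hk) hk'
  all_goals simp

lemma norm_le_sqrt_of_mem_Icc {n : ℕ} {θ : EuclideanSpace ℝ (Fin n)}
    (hθ : ∀ i, θ i ∈ Icc (0 : ℝ) 1) : ‖θ‖ ≤ Real.sqrt n := by
  rw [EuclideanSpace.norm_eq]
  refine Real.sqrt_le_sqrt ?_
  calc ∑ i, ‖θ i‖ ^ 2 ≤ ∑ _i : Fin n, (1 : ℝ) :=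
        Finset.sum_le_sum fun i _ => by
          rw [Real.norm_eq_abs, sq_abs]; nlinarith [(hθ i).1, (hθ i).2]
    _ = n := by simp

abbrev unitCube (n : ℕ) : Set (EuclideanSpace ℝ (Fin n)) :=
  ZSpan.fundamentalDomain (EuclideanSpace.basisFun (Fin n) ℝ).toBasis

lemma mem_Icc_of_mem_unitCube {n : ℕ} {θ : EuclideanSpace ℝ (Fin n)} (hθ : θ ∈ unitCube n)
    (i : Fin n) : θ i ∈ Icc (0 : ℝ) 1 := by
  have := (ZSpan.mem_fundamentalDomain _).mp hθ i
  simp only [OrthonormalBasis.coe_toBasis_repr_apply, EuclideanSpace.basisFun_repr] at this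
  exact Ico_subset_Icc_self this

lemma volume_unitCube_lt_top (n : ℕ) : volume (unitCube n) < ⊤ :=
  (ZSpan.fundamentalDomain_isBounded _).measure_lt_top

def latticeEquiv (n : ℕ) : (Fin n → ℤ) ≃
    (Submodule.span ℤ (Set.range (EuclideanSpace.basisFun (Fin n) ℝ).toBasis)).toAddSubgroup :=
  ((EuclideanSpace.basisFun (Fin n) ℝ).toBasis.restrictScalars ℤ).equivFun.symm.toEquiv

lemma coe_latticeEquiv {n : ℕ} (k : Fin n → ℤ) :
    (latticeEquiv n k : EuclideanSpace ℝ (Fin n)) = lat k := by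
  ext i
  simp only [latticeEquiv, LinearEquiv.coe_toEquiv, Module.Basis.equivFun_symm_apply,
    Submodule.coe_sum, Submodule.coe_smul, Module.Basis.restrictScalars_apply]
  simp [lat, Pi.single_apply]

lemma lintegral_eq_setLIntegral_unitCube_tsum {n : ℕ} {f : EuclideanSpace ℝ (Fin n) → ℝ≥0∞}
    (hf : Measurable f) :
    ∫⁻ ξ, f ξ = ∫⁻ θ in unitCube n, ∑' k : Fin n → ℤ, f (lat k + θ) := by
  -- Mathlib registers this instance for the submodule only, not for its `toAddSubgroup`.
  have : Countable (Submodule.span ℤ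
      (Set.range (EuclideanSpace.basisFun (Fin n) ℝ).toBasis)).toAddSubgroup := by
    change Countable (Submodule.span ℤ _); infer_instance
  rw [(ZSpan.isAddFundamentalDomain' (EuclideanSpace.basisFun (Fin n) ℝ).toBasis
      volume).lintegral_eq_tsum' f,
    lintegral_tsum (f := fun k θ => f (lat k + θ)) fun k => by fun_prop,
    ← ((Equiv.neg _).trans (latticeEquiv n)).tsum_eq]
  refine tsum_congr fun k => ?_
  have hk : ((-latticeEquiv n (-k) : _) : EuclideanSpace ℝ (Fin n)) = lat k := by
    rw [AddSubgroup.coe_neg, coe_latticeEquiv, lat_neg, neg_neg]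
  simp only [Equiv.trans_apply, Equiv.neg_apply, AddSubgroup.vadd_def, vadd_eq_add, hk]

lemma exists_two_pow_ge_rpow_le {ρ σ : ℝ} (hρ : 0 ≤ ρ) (hσ : 0 ≤ σ) :
    ∃ j : ℕ, ρ ≤ 2 ^ j ∧ ((2 : ℝ) ^ σ) ^ j ≤ 2 ^ σ * (ρ ^ σ + 1) := by
  have h2σ : 1 ≤ (2 : ℝ) ^ σ := Real.one_le_rpow one_le_two hσ
  have hρσ : 0 ≤ ρ ^ σ := Real.rpow_nonneg hρ σ
  rcases le_or_gt ρ 1 with hρ1 | hρ1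
  · exact ⟨0, by simpa using hρ1, by nlinarith⟩
  obtain ⟨m, hm, hm'⟩ := exists_nat_pow_near hρ1.le one_lt_two
  refine ⟨m + 1, hm'.le, ?_⟩
  have : ((2 : ℝ) ^ σ) ^ m ≤ ρ ^ σ := by
    rw [Real.rpow_pow_comm zero_le_two]
    exact Real.rpow_le_rpow (by positivity) hm hσ
  rw [pow_succ']
  nlinarith

lemma tsum_mul_ofReal_inv_rpow_add_one_le {ι : Type*} (a : ι → ℝ≥0∞) (ρ : ι → ℝ)
    (hρ : ∀ i, 0 ≤ ρ i) {σ t : ℝ} (hσ : 0 ≤ σ) {C : ℝ≥0∞}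
    (hball : ∀ j : ℕ, ∑' i, (if ρ i ≤ 2 ^ j then a i else 0) ≤ C * ENNReal.ofReal (2 ^ t) ^ j) :
    ∑' i, a i * ENNReal.ofReal ((ρ i ^ σ + 1)⁻¹) ≤
      ENNReal.ofReal (2 ^ σ) * C * (1 - ENNReal.ofReal (2 ^ (t - σ)))⁻¹ := by
  set q : ℝ := 2 ^ σ
  have hq : 0 < q := by positivity
  have hweight : ∀ i, a i * ENNReal.ofReal ((ρ i ^ σ + 1)⁻¹) ≤
      ∑' j : ℕ, (if ρ i ≤ 2 ^ j then a i else 0) * (ENNReal.ofReal q * ENNReal.ofReal q⁻¹ ^ j) := by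
    intro i
    obtain ⟨j, hj, hjq⟩ := exists_two_pow_ge_rpow_le (hρ i) hσ
    refine le_trans ?_ (ENNReal.le_tsum j)
    rw [if_pos hj, ← ENNReal.ofReal_pow (inv_nonneg.mpr hq.le), ← ENNReal.ofReal_mul hq.le]
    gcongr
    have hden : 0 < ρ i ^ σ + 1 := add_pos_of_nonneg_of_pos (Real.rpow_nonneg (hρ i) σ) one_pos
    rw [inv_pow, ← div_eq_mul_inv, le_div_iff₀ (pow_pos hq j), inv_mul_le_iff₀ hden]
    linarith
  have hratio : ENNReal.ofReal (2 ^ t) * ENNReal.ofReal q⁻¹ = ENNReal.ofReal (2 ^ (t - σ)) := by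
    rw [← ENNReal.ofReal_mul (Real.rpow_nonneg zero_le_two t), Real.rpow_sub two_pos,
      div_eq_mul_inv]
  calc ∑' i, a i * ENNReal.ofReal ((ρ i ^ σ + 1)⁻¹)
      ≤ ∑' i, ∑' j : ℕ, (if ρ i ≤ 2 ^ j then a i else 0) *
          (ENNReal.ofReal q * ENNReal.ofReal q⁻¹ ^ j) := ENNReal.tsum_le_tsum hweight
    _ = ∑' j : ℕ, (∑' i, if ρ i ≤ 2 ^ j then a i else 0) *
          (ENNReal.ofReal q * ENNReal.ofReal q⁻¹ ^ j) := by
        rw [ENNReal.tsum_comm]; simp_rw [ENNReal.tsum_mul_right]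
    _ ≤ ∑' j : ℕ, C * ENNReal.ofReal (2 ^ t) ^ j * (ENNReal.ofReal q * ENNReal.ofReal q⁻¹ ^ j) :=
        ENNReal.tsum_le_tsum fun j => by gcongr; exact hball j
    _ = ENNReal.ofReal q * C * ∑' j : ℕ, ENNReal.ofReal (2 ^ (t - σ)) ^ j := by
        rw [← ENNReal.tsum_mul_left]
        refine tsum_congr fun j => ?_
        rw [← hratio, mul_pow]
        ring
    _ = ENNReal.ofReal q * C * (1 - ENNReal.ofReal (2 ^ (t - σ)))⁻¹ := by
        rw [ENNReal.tsum_geometric]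

lemma tsum_div_rpow_add_one_le_of_ball_bound {n : ℕ} {a : (Fin n → ℤ) → ℝ}
    (ha : ∀ k, 0 ≤ a k) {C t c σ : ℝ} (hC : 0 ≤ C) (hc : 0 ≤ c) (hσ : 0 ≤ σ)
    (hball : ∀ R : ℝ, 1 ≤ R → ∑' k, (if ‖lat k‖ ≤ R then a k else 0) ≤ C * R ^ t)
    {θ : EuclideanSpace ℝ (Fin n)} (hθ : ‖θ‖ ≤ c) :
    ∑' k, ENNReal.ofReal (a k / (‖lat k + θ‖ ^ σ + 1)) ≤
      ENNReal.ofReal (2 ^ σ) * ENNReal.ofReal (C * (1 + c) ^ t) *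
        (1 - ENNReal.ofReal (2 ^ (t - σ)))⁻¹ := by
  have hshift : ∀ j : ℕ, ∑' k, (if ‖lat k + θ‖ ≤ 2 ^ j then ENNReal.ofReal (a k) else 0) ≤
      ENNReal.ofReal (C * (1 + c) ^ t) * ENNReal.ofReal (2 ^ t) ^ j := by
    intro j
    have h2j : (1 : ℝ) ≤ 2 ^ j := one_le_pow₀ one_le_two
    have hR : 1 ≤ (1 + c) * 2 ^ j := one_le_mul_of_one_le_of_one_le (by linarith) h2j
    have hlat : ∀ k, ‖lat k + θ‖ ≤ 2 ^ j → ‖lat k‖ ≤ (1 + c) * 2 ^ j := fun k hk =>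
      calc ‖lat k‖ = ‖(lat k + θ) - θ‖ := by rw [add_sub_cancel_right]
        _ ≤ ‖lat k + θ‖ + ‖θ‖ := norm_sub_le _ _
        _ ≤ (1 + c) * 2 ^ j := by nlinarith
    calc _ ≤ ENNReal.ofReal (∑' k, if ‖lat k‖ ≤ (1 + c) * 2 ^ j then a k else 0) :=
          tsum_ite_ofReal_le_ofReal_tsum_lat ha hlat
      _ ≤ ENNReal.ofReal (C * ((1 + c) * 2 ^ j) ^ t) := ENNReal.ofReal_le_ofReal (hball _ hR)
      _ = ENNReal.ofReal (C * (1 + c) ^ t) * ENNReal.ofReal (2 ^ t) ^ j := by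
          rw [Real.mul_rpow (by linarith) (by positivity), ← Real.rpow_pow_comm zero_le_two,
            ← mul_assoc, ENNReal.ofReal_mul (by positivity), ENNReal.ofReal_pow (by positivity)]
  calc ∑' k, ENNReal.ofReal (a k / (‖lat k + θ‖ ^ σ + 1))
      = ∑' k, ENNReal.ofReal (a k) * ENNReal.ofReal ((‖lat k + θ‖ ^ σ + 1)⁻¹) :=
        tsum_congr fun k => by rw [div_eq_mul_inv, ENNReal.ofReal_mul (ha k)]
    _ ≤ _ := tsum_mul_ofReal_inv_rpow_add_one_le _ _ (fun _ => norm_nonneg _) hσ hshift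

lemma exists_bound_of_lt_dimlp {n : ℕ} {p : ℝ} {μ : Measure (EuclideanSpace ℝ (Fin n))} {x : ℝ}
    (h0 : 0 < dimlp p μ) (hx : x < dimlp p μ) :
    ∃ s, x < s ∧ ∃ C : ℝ, 0 < C ∧ ∀ R : ℝ, 1 ≤ R →
      ∀ θ : EuclideanSpace ℝ (Fin n), (∀ i, θ i ∈ Set.Icc (0 : ℝ) 1) →
        (∑' k : Fin n → ℤ, if ‖lat k‖ ≤ R then ‖mFT μ (lat k + θ)‖ ^ p else 0)
          ≤ C * R ^ ((n : ℝ) - s) := by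
  unfold dimlp at h0 hx
  obtain ⟨s, ⟨-, hs⟩, hxs⟩ := exists_lt_of_lt_csSup
    (Set.nonempty_iff_ne_empty.2 fun h => by rw [h, Real.sSup_empty] at h0; exact h0.false) hx
  exact ⟨s, hxs, hs⟩

lemma measurable_mFT {n : ℕ} (μ : Measure (EuclideanSpace ℝ (Fin n))) [SFinite μ] :
    Measurable (mFT μ) := by
  have hcont : Continuous fun p : EuclideanSpace ℝ (Fin n) × EuclideanSpace ℝ (Fin n) =>
      Complex.exp (((-2 * Real.pi * (inner ℝ p.2 p.1 : ℝ) : ℝ) : ℂ) * Complex.I) := by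
    fun_prop
  exact hcont.stronglyMeasurable.integral_prod_right'.measurable

theorem stmt6_general {n : ℕ} (μ : Measure (EuclideanSpace ℝ (Fin n)))
    [IsProbabilityMeasure μ] (s : ℝ) (hs : 0 < s) (hsn : s < n)
    (hdim : dimlp 1 μ = s) (σ : ℝ) (hσ : (n : ℝ) - s < σ) :
    (∫⁻ ξ, ENNReal.ofReal (‖mFT μ ξ‖ / (‖ξ‖ ^ σ + 1))) < ⊤ := by
  obtain ⟨s', hs', C, hC, hbound⟩ :=
    exists_bound_of_lt_dimlp (hdim ▸ hs) (show (n : ℝ) - σ < dimlp 1 μ by linarith)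
  have hσ0 : 0 ≤ σ := by linarith
  set B := ENNReal.ofReal (2 ^ σ) * ENNReal.ofReal (C * (1 + Real.sqrt n) ^ ((n : ℝ) - s')) *
    (1 - ENNReal.ofReal (2 ^ ((n : ℝ) - s' - σ)))⁻¹
  have hB : B ≠ ⊤ := by
    have hr : ENNReal.ofReal (2 ^ ((n : ℝ) - s' - σ)) < 1 :=
      ENNReal.ofReal_lt_one.2 (Real.rpow_lt_one_of_one_lt_of_neg one_lt_two (by linarith))
    exact ENNReal.mul_ne_top (by finiteness) (ENNReal.inv_ne_top.2 (tsub_pos_of_lt hr).ne')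
  have hcube : ∀ θ ∈ unitCube n,
      ∑' k, ENNReal.ofReal (‖mFT μ (lat k + θ)‖ / (‖lat k + θ‖ ^ σ + 1)) ≤ B := fun θ hθ =>
    tsum_div_rpow_add_one_le_of_ball_bound (fun _ => norm_nonneg _) hC.le (Real.sqrt_nonneg _)
      hσ0 (fun R hR => by simpa using hbound R hR θ (mem_Icc_of_mem_unitCube hθ))
      (norm_le_sqrt_of_mem_Icc (mem_Icc_of_mem_unitCube hθ))
  calc _ = ∫⁻ θ in unitCube n,
        ∑' k, ENNReal.ofReal (‖mFT μ (lat k + θ)‖ / (‖lat k + θ‖ ^ σ + 1)) :=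
        lintegral_eq_setLIntegral_unitCube_tsum (by have := measurable_mFT μ; fun_prop)
    _ ≤ ∫⁻ _ in unitCube n, B :=
        setLIntegral_mono' (ZSpan.fundamentalDomain_measurableSet _) hcube
    _ = B * volume (unitCube n) := setLIntegral_const _ _
    _ < ⊤ := ENNReal.mul_lt_top hB.lt_top (volume_unitCube_lt_top n)

/-- If `λ` is a Borel probability measure on `ℝⁿ` with `dim_{l¹} λ = s ∈ (0, n)`,
then for every `σ > n - s`, `∫_{ℝⁿ} |λ̂(ξ)| / (|ξ|^σ + 1) dξ < ∞`. -/
theorem stmt6 {n : ℕ} (hn : 1 ≤ n) (μ : Measure (EuclideanSpace ℝ (Fin n)))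
    [IsProbabilityMeasure μ] (s : ℝ) (hs : 0 < s) (hsn : s < n)
    (hdim : dimlp 1 μ = s) (σ : ℝ) (hσ : (n : ℝ) - s < σ) :
    (∫⁻ ξ, ENNReal.ofReal (‖mFT μ ξ‖ / (‖ξ‖ ^ σ + 1))) < ⊤ :=
  stmt6_general μ s hs hsn hdim σ hσ
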